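/- arXiv:2110.09858 — 2 statements merged into one kernel-verified Lean document; each statement's English description precedes it below -/
import Mathlib

section
/- Let (p,q) be a smooth solution of the complexified NLS system p_t = -i p_xx + 2i p² q, q_t = i q_xx - 2i p q², with q nonvanishing. Then the functions k = p q and l = q_x/q satisfy the long-wave system k_t = i(2 k_x l + 2 k l_x - k_xx) and l_t = i(l_xx + 2 l l_x - 2 k_x). -/
/- STATEMENT 10: If (p,q) is a smooth solution of the complexified NLS system
p_t = -i p_xx + 2i p² q, q_t = i q_xx - 2i p q², with q nonvanishing, then k = pq and
l = q_x/q satisfy k_t = i(2 k_x l + 2 k l_x - k_xx), l_t = i(l_xx + 2 l l_x - 2 k_x). -/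

noncomputable section

/-- Spatial partial derivative (second argument). -/
def Dx (f : ℝ → ℝ → ℂ) : ℝ → ℝ → ℂ := fun t x => deriv (f t) x

/-- Time partial derivative (first argument). -/
def Dt (f : ℝ → ℝ → ℂ) : ℝ → ℝ → ℂ := fun t x => deriv (fun s => f s x) t

section aux
variable (f : ℝ → ℝ → ℂ) (hf : ContDiff ℝ (⊤ : ℕ∞) (fun z : ℝ × ℝ => f z.1 z.2))

lemma curveX (t x : ℝ) : HasDerivAt (fun x : ℝ => ((t, x) : ℝ × ℝ)) ((0 : ℝ), (1 : ℝ)) x := by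
  simpa using (HasDerivAt.prodMk (hasDerivAt_const x t) (hasDerivAt_id x))

lemma curveT (t x : ℝ) : HasDerivAt (fun s : ℝ => ((s, x) : ℝ × ℝ)) ((1 : ℝ), (0 : ℝ)) t := by
  simpa using (HasDerivAt.prodMk (hasDerivAt_id t) (hasDerivAt_const t x))

include hf in
lemma hasDerivAt_x' (t x : ℝ) :
    HasDerivAt (f t) (fderiv ℝ (fun z : ℝ × ℝ => f z.1 z.2) (t, x) (0, 1)) x :=
  ((hf.differentiable (by simp) (t, x)).hasFDerivAt).comp_hasDerivAt x (curveX t x)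

include hf in
lemma hasDerivAt_t' (t x : ℝ) :
    HasDerivAt (fun s => f s x) (fderiv ℝ (fun z : ℝ × ℝ => f z.1 z.2) (t, x) (1, 0)) t :=
  by have h := (hf.differentiable (by simp) (t, x)).hasFDerivAt; exact h.comp_hasDerivAt t (curveT t x)

include hf in
lemma hasDerivAt_Dx (t x : ℝ) : HasDerivAt (f t) (Dx f t x) x :=
  (hasDerivAt_x' f hf t x).differentiableAt.hasDerivAt

include hf in
lemma hasDerivAt_Dt (t x : ℝ) : HasDerivAt (fun s => f s x) (Dt f t x) t :=
  (hasDerivAt_t' f hf t x).differentiableAt.hasDerivAt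

include hf in
lemma Dx_eq (t x : ℝ) :
    Dx f t x = fderiv ℝ (fun z : ℝ × ℝ => f z.1 z.2) (t, x) (0, 1) :=
  (hasDerivAt_x' f hf t x).deriv

include hf in
lemma smooth_Dx : ContDiff ℝ (⊤ : ℕ∞) (fun z : ℝ × ℝ => Dx f z.1 z.2) := by
  have : (fun z : ℝ × ℝ => Dx f z.1 z.2)
      = fun z : ℝ × ℝ => fderiv ℝ (fun z : ℝ × ℝ => f z.1 z.2) z ((0 : ℝ), (1 : ℝ)) := by
    funext z
    exact Dx_eq f hf z.1 z.2
  rw [this]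
  exact (ContinuousLinearMap.apply ℝ ℂ ((0 : ℝ), (1 : ℝ))).contDiff.comp
    (hf.fderiv_right (by simp))

include hf in
lemma Dt_Dx_comm (t x : ℝ) : Dt (Dx f) t x = Dx (Dt f) t x := by
  set F := fun z : ℝ × ℝ => f z.1 z.2 with hF
  set F' := fderiv ℝ F with hF'
  have hFdiff : ∀ y, HasFDerivAt F (F' y) y := fun y =>
    (hf.differentiable (by simp) y).hasFDerivAt
  have hF'cd : ContDiff ℝ (⊤ : ℕ∞) F' := hf.fderiv_right (by simp)
  have hF'd : HasFDerivAt F' (fderiv ℝ F' (t, x)) (t, x) :=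
    (hF'cd.differentiable (by simp) (t, x)).hasFDerivAt
  have hsym := second_derivative_symmetric hFdiff hF'd
  have h1 : Dt (Dx f) t x = fderiv ℝ F' (t, x) (1, 0) (0, 1) := by
    have heq : (fun s => Dx f s x) = fun s => F' (s, x) ((0 : ℝ), (1 : ℝ)) := by
      funext s; exact Dx_eq f hf s x
    have hc : HasDerivAt (fun s => F' (s, x)) (fderiv ℝ F' (t, x) (1, 0)) t :=
      hF'd.comp_hasDerivAt t (curveT t x)
    have := (hc.clm_apply (hasDerivAt_const t ((0 : ℝ), (1 : ℝ))))
    simp only [map_zero, add_zero] at this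
    show deriv (fun s => Dx f s x) t = _
    rw [heq]
    exact this.deriv
  have h2 : Dx (Dt f) t x = fderiv ℝ F' (t, x) (0, 1) (1, 0) := by
    have heq : (fun y => Dt f t y) = fun y => F' (t, y) ((1 : ℝ), (0 : ℝ)) := by
      funext y; exact (hasDerivAt_t' f hf t y).deriv
    have hc : HasDerivAt (fun y => F' (t, y)) (fderiv ℝ F' (t, x) (0, 1)) x :=
      hF'd.comp_hasDerivAt x (curveX t x)
    have := (hc.clm_apply (hasDerivAt_const x ((1 : ℝ), (0 : ℝ))))
    simp only [map_zero, add_zero] at this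
    show deriv (fun y => Dt f t y) x = _
    rw [heq]
    exact this.deriv
  rw [h1, h2, hsym]

end aux

open Complex in
theorem NLS_to_long_wave_system
    (p q : ℝ → ℝ → ℂ)
    (hp : ContDiff ℝ (⊤ : ℕ∞) (fun z : ℝ × ℝ => p z.1 z.2))
    (hq : ContDiff ℝ (⊤ : ℕ∞) (fun z : ℝ × ℝ => q z.1 z.2))
    (hqne : ∀ t x, q t x ≠ 0)
    (hNLSp : ∀ t x, Dt p t x = -I * Dx (Dx p) t x + 2 * I * (p t x) ^ 2 * q t x)
    (hNLSq : ∀ t x, Dt q t x = I * Dx (Dx q) t x - 2 * I * p t x * (q t x) ^ 2)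
    (k l : ℝ → ℝ → ℂ)
    (hk : k = fun t x => p t x * q t x)
    (hl : l = fun t x => Dx q t x / q t x) :
    ∀ t x,
      Dt k t x = I * (2 * Dx k t x * l t x + 2 * k t x * Dx l t x - Dx (Dx k) t x) ∧
      Dt l t x = I * (Dx (Dx l) t x + 2 * l t x * Dx l t x - 2 * Dx k t x) := by
  subst hk hl
  have hp1 := smooth_Dx p hp
  have hq1 := smooth_Dx q hq
  have hq2 := smooth_Dx _ hq1
  -- pointwise formulas
  have hkx : ∀ t x, Dx (fun t x => p t x * q t x) t x
      = Dx p t x * q t x + p t x * Dx q t x := by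
    intro t x
    exact ((hasDerivAt_Dx p hp t x).mul (hasDerivAt_Dx q hq t x)).deriv
  have hkxx : ∀ t x, Dx (Dx (fun t x => p t x * q t x)) t x
      = (Dx (Dx p) t x * q t x + Dx p t x * Dx q t x)
        + (Dx p t x * Dx q t x + p t x * Dx (Dx q) t x) := by
    intro t x
    have heq : (Dx (fun t x => p t x * q t x)) t
        = fun x => Dx p t x * q t x + p t x * Dx q t x := by
      funext y; exact hkx t y
    show deriv ((Dx fun t x => p t x * q t x) t) x = _
    rw [heq]
    exact (((hasDerivAt_Dx _ hp1 t x).mul (hasDerivAt_Dx q hq t x)).add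
      ((hasDerivAt_Dx p hp t x).mul (hasDerivAt_Dx _ hq1 t x))).deriv
  have hkt : ∀ t x, Dt (fun t x => p t x * q t x) t x
      = Dt p t x * q t x + p t x * Dt q t x := by
    intro t x
    exact ((hasDerivAt_Dt p hp t x).mul (hasDerivAt_Dt q hq t x)).deriv
  have hlx : ∀ t x, Dx (fun t x => Dx q t x / q t x) t x
      = (Dx (Dx q) t x * q t x - Dx q t x * Dx q t x) / q t x ^ 2 := by
    intro t x
    exact ((hasDerivAt_Dx _ hq1 t x).div (hasDerivAt_Dx q hq t x) (hqne t x)).deriv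
  have hlxx : ∀ t x, Dx (Dx (fun t x => Dx q t x / q t x)) t x
      = (((Dx (Dx (Dx q)) t x * q t x + Dx (Dx q) t x * Dx q t x)
            - (Dx (Dx q) t x * Dx q t x + Dx q t x * Dx (Dx q) t x)) * q t x ^ 2
          - (Dx (Dx q) t x * q t x - Dx q t x * Dx q t x)
            * (Dx q t x * q t x + q t x * Dx q t x)) / (q t x ^ 2) ^ 2 := by
    intro t x
    have heq : (Dx (fun t x => Dx q t x / q t x)) t
        = fun x => (Dx (Dx q) t x * q t x - Dx q t x * Dx q t x) / q t x ^ 2 := by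
      funext y; exact hlx t y
    show deriv ((Dx fun t x => Dx q t x / q t x) t) x = _
    rw [heq]
    have hN : HasDerivAt (fun x => Dx (Dx q) t x * q t x - Dx q t x * Dx q t x)
        ((Dx (Dx (Dx q)) t x * q t x + Dx (Dx q) t x * Dx q t x)
          - (Dx (Dx q) t x * Dx q t x + Dx q t x * Dx (Dx q) t x)) x :=
      ((hasDerivAt_Dx _ hq2 t x).mul (hasDerivAt_Dx q hq t x)).sub
        ((hasDerivAt_Dx _ hq1 t x).mul (hasDerivAt_Dx _ hq1 t x))
    have hD : HasDerivAt (fun x => q t x ^ 2) (Dx q t x * q t x + q t x * Dx q t x) x := by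
      rw [show (fun x => q t x ^ 2) = fun x => q t x * q t x from funext fun y => pow_two _]; exact (hasDerivAt_Dx q hq t x).mul (hasDerivAt_Dx q hq t x)
    exact (hN.div hD (pow_ne_zero 2 (hqne t x))).deriv
  have hlt : ∀ t x, Dt (fun t x => Dx q t x / q t x) t x
      = (Dt (Dx q) t x * q t x - Dx q t x * Dt q t x) / q t x ^ 2 := by
    intro t x
    exact ((hasDerivAt_Dt _ hq1 t x).div (hasDerivAt_Dt q hq t x) (hqne t x)).deriv
  -- derivative of the NLS right-hand side for q
  have hqtx : ∀ t x, Dx (Dt q) t x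
      = I * Dx (Dx (Dx q)) t x
        - 2 * I * (Dx p t x * q t x ^ 2
            + p t x * (Dx q t x * q t x + q t x * Dx q t x)) := by
    intro t x
    have heq : (Dt q) t = fun x => I * Dx (Dx q) t x - 2 * I * (p t x * q t x ^ 2) := by
      funext y; rw [show (Dt q) t y = _ from hNLSq t y]; ring
    show deriv ((Dt q) t) x = _
    rw [heq]
    have h1 : HasDerivAt (fun x => I * Dx (Dx q) t x) (I * Dx (Dx (Dx q)) t x) x :=
      (hasDerivAt_Dx _ hq2 t x).const_mul I
    have hpw : HasDerivAt (fun x => q t x ^ 2) (Dx q t x * q t x + q t x * Dx q t x) x := by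
      rw [show (fun x => q t x ^ 2) = fun x => q t x * q t x from funext fun y => pow_two _]; exact (hasDerivAt_Dx q hq t x).mul (hasDerivAt_Dx q hq t x)
    have h2 : HasDerivAt (fun x => 2 * I * (p t x * q t x ^ 2))
        (2 * I * (Dx p t x * q t x ^ 2
            + p t x * (Dx q t x * q t x + q t x * Dx q t x))) x :=
      ((hasDerivAt_Dx p hp t x).mul hpw).const_mul (2 * I)
    exact (h1.sub h2).deriv
  intro t x
  constructor
  · rw [hkt, hkxx, hkx, hlx, hNLSp, hNLSq]
    field_simp [hqne t x]
    ring
  · rw [hlt, hlxx, hlx, hkx, Dt_Dx_comm q hq, hqtx, hNLSq]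
    field_simp [hqne t x]
    ring

end
end

section
/- Suppose (p,q) solves the complexified NLS system p_t = -i p_xx + 2i p² q, q_t = i q_xx - 2i p q² and also the stationary ODE system -iμ(p_xx - 2p²q) - 2t p_x - i x p = 0, iμ(q_xx - 2pq²) - 2t q_x + i x q = 0 (μ ≠ 0 a constant) on a domain. Then the quantity p_x q - q_x p - (2it/μ) p q is constant (independent of both t and x) on that domain. -/
noncomputable section

theorem hasDerivAt_snd' {f : ℝ → ℝ → ℂ} (hf : ContDiff ℝ (⊤ : ℕ∞) (fun z : ℝ × ℝ => f z.1 z.2)) (t x : ℝ) :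
    HasDerivAt (f t) (fderiv ℝ (fun z : ℝ × ℝ => f z.1 z.2) (t, x) (0, 1)) x := by
  have h := ((hf.differentiable (by simp)) (t, x)).hasFDerivAt
  have hc : HasDerivAt (fun x : ℝ => ((t, x) : ℝ × ℝ)) ((0 : ℝ), (1 : ℝ)) x :=
    (hasDerivAt_const x t).prodMk (hasDerivAt_id x)
  exact h.comp_hasDerivAt x hc

theorem hasDerivAt_fst' {f : ℝ → ℝ → ℂ} (hf : ContDiff ℝ (⊤ : ℕ∞) (fun z : ℝ × ℝ => f z.1 z.2)) (t x : ℝ) :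
    HasDerivAt (fun s => f s x) (fderiv ℝ (fun z : ℝ × ℝ => f z.1 z.2) (t, x) (1, 0)) t := by
  have h := ((hf.differentiable (by simp)) (t, x)).hasFDerivAt
  have hc : HasDerivAt (fun s : ℝ => ((s, x) : ℝ × ℝ)) ((1 : ℝ), (0 : ℝ)) t :=
    (hasDerivAt_id t).prodMk (hasDerivAt_const t x)
  exact h.comp_hasDerivAt t hc

theorem Dx_hasDerivAt {f : ℝ → ℝ → ℂ} (hf : ContDiff ℝ (⊤ : ℕ∞) (fun z : ℝ × ℝ => f z.1 z.2)) (t x : ℝ) :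
    HasDerivAt (fun x' => f t x') (Dx f t x) x :=
  (hasDerivAt_snd' hf t x).differentiableAt.hasDerivAt

theorem Dt_hasDerivAt {f : ℝ → ℝ → ℂ} (hf : ContDiff ℝ (⊤ : ℕ∞) (fun z : ℝ × ℝ => f z.1 z.2)) (t x : ℝ) :
    HasDerivAt (fun s => f s x) (Dt f t x) t :=
  (hasDerivAt_fst' hf t x).differentiableAt.hasDerivAt

theorem Dx_contDiff {f : ℝ → ℝ → ℂ} (hf : ContDiff ℝ (⊤ : ℕ∞) (fun z : ℝ × ℝ => f z.1 z.2)) :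
    ContDiff ℝ (⊤ : ℕ∞) (fun z : ℝ × ℝ => Dx f z.1 z.2) := by
  have h1 : ContDiff ℝ (⊤ : ℕ∞) (fun z : ℝ × ℝ => fderiv ℝ (fun z : ℝ × ℝ => f z.1 z.2) z ((0 : ℝ), (1 : ℝ))) :=
    (hf.fderiv_right (by simp)).clm_apply contDiff_const
  have e : (fun z : ℝ × ℝ => Dx f z.1 z.2) = fun z : ℝ × ℝ => fderiv ℝ (fun z : ℝ × ℝ => f z.1 z.2) z ((0 : ℝ), (1 : ℝ)) :=
    funext fun z => (hasDerivAt_snd' hf z.1 z.2).deriv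
  rw [e]; exact h1

theorem Dt_contDiff {f : ℝ → ℝ → ℂ} (hf : ContDiff ℝ (⊤ : ℕ∞) (fun z : ℝ × ℝ => f z.1 z.2)) :
    ContDiff ℝ (⊤ : ℕ∞) (fun z : ℝ × ℝ => Dt f z.1 z.2) := by
  have h1 : ContDiff ℝ (⊤ : ℕ∞) (fun z : ℝ × ℝ => fderiv ℝ (fun z : ℝ × ℝ => f z.1 z.2) z ((1 : ℝ), (0 : ℝ))) :=
    (hf.fderiv_right (by simp)).clm_apply contDiff_const
  have e : (fun z : ℝ × ℝ => Dt f z.1 z.2) = fun z : ℝ × ℝ => fderiv ℝ (fun z : ℝ × ℝ => f z.1 z.2) z ((1 : ℝ), (0 : ℝ)) :=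
    funext fun z => (hasDerivAt_fst' hf z.1 z.2).deriv
  rw [e]; exact h1

theorem clairaut' {f : ℝ → ℝ → ℂ} (hf : ContDiff ℝ (⊤ : ℕ∞) (fun z : ℝ × ℝ => f z.1 z.2)) (t x : ℝ) :
    Dt (Dx f) t x = Dx (Dt f) t x := by
  set F := fun z : ℝ × ℝ => f z.1 z.2 with hF
  have hF' : ∀ y, HasFDerivAt F (fderiv ℝ F y) y := fun y => (hf.differentiable (by simp) y).hasFDerivAt
  have hF'' : HasFDerivAt (fderiv ℝ F) (fderiv ℝ (fderiv ℝ F) (t, x)) (t, x) :=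
    (((hf.fderiv_right (m := (⊤ : ℕ∞)) (by simp)).differentiable (by simp)) (t, x)).hasFDerivAt
  have hsym := second_derivative_symmetric hF' hF'' ((1 : ℝ), (0 : ℝ)) ((0 : ℝ), (1 : ℝ))
  have h1 : HasDerivAt (fun s : ℝ => fderiv ℝ F (s, x)) (fderiv ℝ (fderiv ℝ F) (t, x) (1, 0)) t := by
    have hc : HasDerivAt (fun s : ℝ => ((s, x) : ℝ × ℝ)) ((1 : ℝ), (0 : ℝ)) t :=
      (hasDerivAt_id t).prodMk (hasDerivAt_const t x)
    exact hF''.comp_hasDerivAt t hc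
  have h2 : HasDerivAt (fun s : ℝ => fderiv ℝ F (s, x) ((0 : ℝ), (1 : ℝ)))
      (fderiv ℝ (fderiv ℝ F) (t, x) (1, 0) ((0 : ℝ), (1 : ℝ))) t := by
    have := h1.clm_apply (hasDerivAt_const t ((0 : ℝ), (1 : ℝ)))
    simpa using this
  have e1 : Dt (Dx f) t x = fderiv ℝ (fderiv ℝ F) (t, x) (1, 0) ((0 : ℝ), (1 : ℝ)) := by
    have he : (fun s => Dx f s x) = fun s : ℝ => fderiv ℝ F (s, x) ((0 : ℝ), (1 : ℝ)) :=
      funext fun s => (hasDerivAt_snd' hf s x).deriv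
    show deriv (fun s => Dx f s x) t = _
    rw [he, h2.deriv]
  have h3 : HasDerivAt (fun x' : ℝ => fderiv ℝ F (t, x')) (fderiv ℝ (fderiv ℝ F) (t, x) (0, 1)) x := by
    have hc : HasDerivAt (fun x' : ℝ => ((t, x') : ℝ × ℝ)) ((0 : ℝ), (1 : ℝ)) x :=
      (hasDerivAt_const x t).prodMk (hasDerivAt_id x)
    exact hF''.comp_hasDerivAt x hc
  have h4 : HasDerivAt (fun x' : ℝ => fderiv ℝ F (t, x') ((1 : ℝ), (0 : ℝ)))
      (fderiv ℝ (fderiv ℝ F) (t, x) (0, 1) ((1 : ℝ), (0 : ℝ))) x := by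
    have := h3.clm_apply (hasDerivAt_const x ((1 : ℝ), (0 : ℝ)))
    simpa using this
  have e2 : Dx (Dt f) t x = fderiv ℝ (fderiv ℝ F) (t, x) (0, 1) ((1 : ℝ), (0 : ℝ)) := by
    have he : (fun x' => Dt f t x') = fun x' : ℝ => fderiv ℝ F (t, x') ((1 : ℝ), (0 : ℝ)) :=
      funext fun x' => (hasDerivAt_fst' hf t x').deriv
    show deriv (fun x' => Dt f t x') x = _
    rw [he, h4.deriv]
  rw [e1, e2, hsym]

theorem hasDerivAt_ofReal' (t : ℝ) : HasDerivAt (fun s : ℝ => (s : ℂ)) 1 t := by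
  simpa using (hasDerivAt_id t).ofReal_comp

open Complex in
theorem first_integral_of_stationary_NLS_symmetry
    (μ : ℂ) (hμ : μ ≠ 0)
    (p q : ℝ → ℝ → ℂ)
    (hp : ContDiff ℝ (⊤ : ℕ∞) (fun z : ℝ × ℝ => p z.1 z.2))
    (hq : ContDiff ℝ (⊤ : ℕ∞) (fun z : ℝ × ℝ => q z.1 z.2))
    (hNLSp : ∀ t x, Dt p t x = -I * Dx (Dx p) t x + 2 * I * (p t x) ^ 2 * q t x)
    (hNLSq : ∀ t x, Dt q t x = I * Dx (Dx q) t x - 2 * I * p t x * (q t x) ^ 2)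
    (hODEp : ∀ t x, -I * μ * (Dx (Dx p) t x - 2 * (p t x) ^ 2 * q t x)
      - 2 * (t : ℂ) * Dx p t x - I * (x : ℂ) * p t x = 0)
    (hODEq : ∀ t x, I * μ * (Dx (Dx q) t x - 2 * p t x * (q t x) ^ 2)
      - 2 * (t : ℂ) * Dx q t x + I * (x : ℂ) * q t x = 0)
    (W : ℝ → ℝ → ℂ)
    (hW : W = fun t x => Dx p t x * q t x - Dx q t x * p t x
      - (2 * I * (t : ℂ) / μ) * p t x * q t x) :
    ∃ C : ℂ, ∀ t x, W t x = C := by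
  have hpxc : ContDiff ℝ (⊤ : ℕ∞) (fun z : ℝ × ℝ => Dx p z.1 z.2) := Dx_contDiff hp
  have hqxc : ContDiff ℝ (⊤ : ℕ∞) (fun z : ℝ × ℝ => Dx q z.1 z.2) := Dx_contDiff hq
  -- time derivatives expressed via spatial ones
  have hPt : ∀ t x, Dt p t x = (2 * (t : ℂ) * Dx p t x + I * (x : ℂ) * p t x) / μ := by
    intro t x
    rw [eq_div_iff hμ]
    linear_combination μ * (hNLSp t x) + hODEp t x
  have hQt : ∀ t x, Dt q t x = (2 * (t : ℂ) * Dx q t x - I * (x : ℂ) * q t x) / μ := by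
    intro t x
    rw [eq_div_iff hμ]
    linear_combination μ * (hNLSq t x) + hODEq t x
  have hPXT : ∀ t x, Dt (Dx p) t x
      = (2 * (t : ℂ) * Dx (Dx p) t x + I * p t x + I * (x : ℂ) * Dx p t x) / μ := by
    intro t x
    have hfun : (Dt p t) = fun x' => (2 * (t : ℂ) * Dx p t x' + I * (x' : ℂ) * p t x') / μ :=
      funext fun x' => hPt t x'
    have hr : HasDerivAt (fun x' => (2 * (t : ℂ) * Dx p t x' + I * (x' : ℂ) * p t x') / μ)
        ((2 * (t : ℂ) * Dx (Dx p) t x + (I * 1 * p t x + I * (x : ℂ) * Dx p t x)) / μ) x :=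
      (((Dx_hasDerivAt hpxc t x).const_mul (2 * (t : ℂ))).add
        (((hasDerivAt_ofReal' x).const_mul I).mul (Dx_hasDerivAt hp t x))).div_const μ
    rw [clairaut' hp t x]
    show deriv (Dt p t) x = _
    rw [hfun, hr.deriv]
    ring
  have hQXT : ∀ t x, Dt (Dx q) t x
      = (2 * (t : ℂ) * Dx (Dx q) t x - I * q t x - I * (x : ℂ) * Dx q t x) / μ := by
    intro t x
    have hfun : (Dt q t) = fun x' => (2 * (t : ℂ) * Dx q t x' - I * (x' : ℂ) * q t x') / μ :=
      funext fun x' => hQt t x'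
    have hr : HasDerivAt (fun x' => (2 * (t : ℂ) * Dx q t x' - I * (x' : ℂ) * q t x') / μ)
        ((2 * (t : ℂ) * Dx (Dx q) t x - (I * 1 * q t x + I * (x : ℂ) * Dx q t x)) / μ) x :=
      (((Dx_hasDerivAt hqxc t x).const_mul (2 * (t : ℂ))).sub
        (((hasDerivAt_ofReal' x).const_mul I).mul (Dx_hasDerivAt hq t x))).div_const μ
    rw [clairaut' hq t x]
    show deriv (Dt q t) x = _
    rw [hfun, hr.deriv]
    ring
  -- spatial constancy
  have hx0 : ∀ t x, HasDerivAt (fun x' => W t x') 0 x := by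
    intro t x
    have h1 := (Dx_hasDerivAt hpxc t x).mul (Dx_hasDerivAt hq t x)
    have h2 := (Dx_hasDerivAt hqxc t x).mul (Dx_hasDerivAt hp t x)
    have h3 := ((Dx_hasDerivAt hp t x).const_mul (2 * I * (t : ℂ) / μ)).mul (Dx_hasDerivAt hq t x)
    have hd := (h1.sub h2).sub h3
    have hfun : (fun x' => W t x') = fun x' => Dx p t x' * q t x' - Dx q t x' * p t x'
        - (2 * I * (t : ℂ) / μ) * p t x' * q t x' := by rw [hW]
    rw [hfun]
    convert hd using 1
    case e'_4 => rfl
    case e'_8 => rfl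
    have h2p := hODEp t x
    have h2q := hODEq t x
    field_simp
    linear_combination (norm := ring_nf) (-(I * q t x)) * h2p + (-(I * p t x)) * h2q
      + (-(μ * (Dx (Dx p) t x * q t x - Dx (Dx q) t x * p t x))) * Complex.I_sq
  -- time constancy
  have ht0 : ∀ t x, HasDerivAt (fun s => W s x) 0 t := by
    intro t x
    have k1 := (Dt_hasDerivAt hpxc t x).mul (Dt_hasDerivAt hq t x)
    have k2 := (Dt_hasDerivAt hqxc t x).mul (Dt_hasDerivAt hp t x)
    have kc : HasDerivAt (fun s : ℝ => 2 * I * (s : ℂ) / μ) (2 * I * 1 / μ) t :=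
      ((hasDerivAt_ofReal' t).const_mul (2 * I)).div_const μ
    have k3 := (kc.mul (Dt_hasDerivAt hp t x)).mul (Dt_hasDerivAt hq t x)
    have hd := (k1.sub k2).sub k3
    have hfun : (fun s => W s x) = fun s => Dx p s x * q s x - Dx q s x * p s x
        - (2 * I * (s : ℂ) / μ) * p s x * q s x := by rw [hW]
    rw [hfun]
    convert hd using 1
    case e'_4 => rfl
    case e'_8 => rfl
    rw [hPXT t x, hQXT t x, hPt t x, hQt t x]
    simp only [Pi.mul_apply]
    have h2p := hODEp t x
    have h2q := hODEq t x
    field_simp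
    linear_combination (norm := ring_nf) -2 * I * (t : ℂ) * q t x * h2p
      - 2 * I * (t : ℂ) * p t x * h2q
      - (2 * (t : ℂ) * μ * (Dx (Dx p) t x * q t x - Dx (Dx q) t x * p t x)) * Complex.I_sq
  refine ⟨W 0 0, fun t x => ?_⟩
  have e1 : W t x = W t 0 :=
    is_const_of_deriv_eq_zero (fun x' => (hx0 t x').differentiableAt)
      (fun x' => (hx0 t x').deriv) x 0
  have e2 : W t 0 = W 0 0 :=
    is_const_of_deriv_eq_zero (fun s => (ht0 s 0).differentiableAt)
      (fun s => (ht0 s 0).deriv) t 0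
  rw [e1, e2]
end
end
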